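/- Let f₁, f₂ be holomorphic injective maps on the unit disk with disjoint images, normalized by f₁(0)=0, f₁'(0)=1, f₂(0)=1. Suppose g₁, g₂ are another such normalized pair with the same cross-kernels: f₁'(ζ)f₂'(z)/(f₁(ζ)−f₂(z))² = g₁'(ζ)g₂'(z)/(g₁(ζ)−g₂(z))² and symmetrically, and the same diagonal Grunsky kernels 1/(ζ−z)² − f_i'(ζ)f_i'(z)/(f_i(ζ)−f_i(z))² = 1/(ζ−z)² − g_i'(ζ)g_i'(z)/(g_i(ζ)−g_i(z))² for i=1,2. Then from these kernels one recovers f₂'(0), f₂''(0), f₁''(0), and the Schwarzians S(f₁), S(f₂); in particular f₁ = g₁ and f₂ = g₂. -/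

import Mathlib

/-!
The cross-kernel `f₂'(ζ) f₁'(z) / (f₂(ζ) - f₁(z))²` at `z = 0` is `f₂' / f₂²`, the derivative of
`-1 / f₂`; together with `f₂(0) = 1` it pins down `f₂`. Once `f₂ = g₂`, the other cross-kernel
at a point `z₀` with `f₂'(z₀) ≠ 0` is `f₂'(z₀)` times `f₁' / (f₁ - w)²` with `w = f₂(z₀)`, the
derivative of `-1 / (f₁ - w)`, which pins down `f₁` in the same way; `w` lies outside the
image of `f₁` by disjointness.
-/

section

variable {𝕜 : Type*} [RCLike 𝕜] {s : Set 𝕜}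

theorem IsOpen.exists_deriv_ne_zero_of_injOn {G : Type*} [NormedAddCommGroup G]
    [NormedSpace 𝕜 G] (hs : IsOpen s) (hs' : IsPreconnected s) {f : 𝕜 → G}
    (hf : DifferentiableOn 𝕜 f s) (hinj : Set.InjOn f s) (hnt : s.Nontrivial) :
    ∃ z ∈ s, deriv f z ≠ 0 := by
  obtain ⟨x, hx, y, hy, hxy⟩ := hnt
  by_contra! h
  exact hxy (hinj hx hy (hs.is_const_of_deriv_eq_zero hs' hf (fun z hz => h z hz) hx hy))

theorem HasDerivAt.inv_sub_const {f : 𝕜 → 𝕜} {f' x w : 𝕜} (hf : HasDerivAt f f' x)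
    (hfw : f x ≠ w) : HasDerivAt (fun y => (f y - w)⁻¹) (-(f' / (f x - w) ^ 2)) x := by
  simpa only [neg_div, Pi.inv_def] using (hf.sub_const w).inv (sub_ne_zero.mpr hfw)

theorem IsOpen.eqOn_of_deriv_div_sub_sq_eq (hs : IsOpen s) (hs' : IsPreconnected s)
    {f g : 𝕜 → 𝕜} (hf : DifferentiableOn 𝕜 f s) (hg : DifferentiableOn 𝕜 g s) {w : 𝕜}
    (hfw : ∀ x ∈ s, f x ≠ w) (hgw : ∀ x ∈ s, g x ≠ w)
    (h : s.EqOn (fun x => deriv f x / (f x - w) ^ 2) (fun x => deriv g x / (g x - w) ^ 2))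
    {x₀ : 𝕜} (hx₀ : x₀ ∈ s) (h₀ : f x₀ = g x₀) : s.EqOn f g := by
  have hasDeriv {φ : 𝕜 → 𝕜} (hφ : DifferentiableOn 𝕜 φ s) (hφw : ∀ x ∈ s, φ x ≠ w) {x : 𝕜}
      (hx : x ∈ s) :
      HasDerivAt (fun y => (φ y - w)⁻¹) (-(deriv φ x / (φ x - w) ^ 2)) x :=
    (hφ.differentiableAt (hs.mem_nhds hx)).hasDerivAt.inv_sub_const (hφw x hx)
  have hinv : s.EqOn (fun y => (f y - w)⁻¹) (fun y => (g y - w)⁻¹) :=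
    hs.eqOn_of_deriv_eq hs'
      (fun x hx => (hasDeriv hf hfw hx).differentiableAt.differentiableWithinAt)
      (fun x hx => (hasDeriv hg hgw hx).differentiableAt.differentiableWithinAt)
      (fun x hx => by
        rw [(hasDeriv hf hfw hx).deriv, (hasDeriv hg hgw hx).deriv]
        exact congrArg Neg.neg (h hx))
      hx₀ (by simp only [h₀])
  exact fun x hx => sub_left_injective (inv_inj.mp (hinv hx))

end

theorem grunsky_kernels_determine_pair_general
    (f₁ f₂ g₁ g₂ : ℂ → ℂ)
    (hf₁ : DifferentiableOn ℂ f₁ (Metric.ball (0 : ℂ) 1))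
    (hf₂ : DifferentiableOn ℂ f₂ (Metric.ball (0 : ℂ) 1))
    (hg₁ : DifferentiableOn ℂ g₁ (Metric.ball (0 : ℂ) 1))
    (hg₂ : DifferentiableOn ℂ g₂ (Metric.ball (0 : ℂ) 1))
    (hif₂ : Set.InjOn f₂ (Metric.ball (0 : ℂ) 1))
    (hdisjf : Disjoint (f₁ '' Metric.ball (0 : ℂ) 1) (f₂ '' Metric.ball (0 : ℂ) 1))
    (hdisjg : Disjoint (g₁ '' Metric.ball (0 : ℂ) 1) (g₂ '' Metric.ball (0 : ℂ) 1))
    (hnf₁0 : f₁ 0 = 0) (hnf₁' : deriv f₁ 0 = 1) (hnf₂0 : f₂ 0 = 1)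
    (hng₁0 : g₁ 0 = 0) (hng₁' : deriv g₁ 0 = 1) (hng₂0 : g₂ 0 = 1)
    (hcross12 : ∀ ζ ∈ Metric.ball (0 : ℂ) 1, ∀ z ∈ Metric.ball (0 : ℂ) 1,
      deriv f₁ ζ * deriv f₂ z / (f₁ ζ - f₂ z) ^ 2
        = deriv g₁ ζ * deriv g₂ z / (g₁ ζ - g₂ z) ^ 2)
    (hcross21 : ∀ ζ ∈ Metric.ball (0 : ℂ) 1, ∀ z ∈ Metric.ball (0 : ℂ) 1,
      deriv f₂ ζ * deriv f₁ z / (f₂ ζ - f₁ z) ^ 2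
        = deriv g₂ ζ * deriv g₁ z / (g₂ ζ - g₁ z) ^ 2) :
    Set.EqOn f₁ g₁ (Metric.ball (0 : ℂ) 1) ∧
      Set.EqOn f₂ g₂ (Metric.ball (0 : ℂ) 1) := by
  set B := Metric.ball (0 : ℂ) 1
  have hBo : IsOpen B := Metric.isOpen_ball
  have hBc : IsPreconnected B := (convex_ball 0 1).isPreconnected
  have h0B : (0 : ℂ) ∈ B := Metric.mem_ball_self one_pos
  have avoid {φ ψ : ℂ → ℂ} (hd : Disjoint (φ '' B) (ψ '' B)) {ζ z : ℂ} (hζ : ζ ∈ B)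
      (hz : z ∈ B) : ψ z ≠ φ ζ := fun h =>
    Set.disjoint_left.mp hd (Set.mem_image_of_mem φ hζ) ⟨z, hz, h⟩
  have heq₂ : B.EqOn f₂ g₂ := by
    refine hBo.eqOn_of_deriv_div_sub_sq_eq hBc hf₂ hg₂ (w := 0)
      (fun x hx => hnf₁0 ▸ avoid hdisjf h0B hx) (fun x hx => hng₁0 ▸ avoid hdisjg h0B hx)
      (fun x hx => ?_) h0B (by rw [hnf₂0, hng₂0])
    simpa [hnf₁0, hnf₁', hng₁0, hng₁'] using hcross21 x hx 0 h0B
  obtain ⟨z₀, hz₀, hd₀⟩ := hBo.exists_deriv_ne_zero_of_injOn hBc hf₂ hif₂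
    ⟨0, h0B, 1 / 2, by norm_num [B], by norm_num⟩
  have hg₂z₀ : g₂ z₀ = f₂ z₀ := (heq₂ hz₀).symm
  have hg₂'z₀ : deriv g₂ z₀ = deriv f₂ z₀ := (heq₂.deriv hBo hz₀).symm
  refine ⟨hBo.eqOn_of_deriv_div_sub_sq_eq hBc hf₁ hg₁ (w := f₂ z₀)
    (fun x hx => (avoid hdisjf hx hz₀).symm) (fun x hx => hg₂z₀ ▸ (avoid hdisjg hx hz₀).symm)
    (fun x hx => ?_) h0B (by rw [hnf₁0, hng₁0]), heq₂⟩
  have hcross := hcross12 x hx z₀ hz₀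
  rw [hg₂'z₀, hg₂z₀, mul_comm, mul_div_assoc, mul_comm (deriv g₁ x), mul_div_assoc] at hcross
  exact mul_left_cancel₀ hd₀ hcross

/-- A normalized pair of non-overlapping univalent maps on the unit disk is uniquely
determined by its Grunsky kernels: equality of the cross-kernels and of the diagonal
Grunsky kernels forces `f₁ = g₁` and `f₂ = g₂`. -/
theorem grunsky_kernels_determine_pair
    (f₁ f₂ g₁ g₂ : ℂ → ℂ)
    (hf₁ : DifferentiableOn ℂ f₁ (Metric.ball (0 : ℂ) 1))
    (hf₂ : DifferentiableOn ℂ f₂ (Metric.ball (0 : ℂ) 1))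
    (hg₁ : DifferentiableOn ℂ g₁ (Metric.ball (0 : ℂ) 1))
    (hg₂ : DifferentiableOn ℂ g₂ (Metric.ball (0 : ℂ) 1))
    (hif₁ : Set.InjOn f₁ (Metric.ball (0 : ℂ) 1))
    (hif₂ : Set.InjOn f₂ (Metric.ball (0 : ℂ) 1))
    (hig₁ : Set.InjOn g₁ (Metric.ball (0 : ℂ) 1))
    (hig₂ : Set.InjOn g₂ (Metric.ball (0 : ℂ) 1))
    (hdisjf : Disjoint (f₁ '' Metric.ball (0 : ℂ) 1) (f₂ '' Metric.ball (0 : ℂ) 1))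
    (hdisjg : Disjoint (g₁ '' Metric.ball (0 : ℂ) 1) (g₂ '' Metric.ball (0 : ℂ) 1))
    (hnf₁0 : f₁ 0 = 0) (hnf₁' : deriv f₁ 0 = 1) (hnf₂0 : f₂ 0 = 1)
    (hng₁0 : g₁ 0 = 0) (hng₁' : deriv g₁ 0 = 1) (hng₂0 : g₂ 0 = 1)
    (hcross12 : ∀ ζ ∈ Metric.ball (0 : ℂ) 1, ∀ z ∈ Metric.ball (0 : ℂ) 1,
      deriv f₁ ζ * deriv f₂ z / (f₁ ζ - f₂ z) ^ 2
        = deriv g₁ ζ * deriv g₂ z / (g₁ ζ - g₂ z) ^ 2)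
    (hcross21 : ∀ ζ ∈ Metric.ball (0 : ℂ) 1, ∀ z ∈ Metric.ball (0 : ℂ) 1,
      deriv f₂ ζ * deriv f₁ z / (f₂ ζ - f₁ z) ^ 2
        = deriv g₂ ζ * deriv g₁ z / (g₂ ζ - g₁ z) ^ 2)
    (hdiag1 : ∀ ζ ∈ Metric.ball (0 : ℂ) 1, ∀ z ∈ Metric.ball (0 : ℂ) 1, ζ ≠ z →
      1 / (ζ - z) ^ 2 - deriv f₁ ζ * deriv f₁ z / (f₁ ζ - f₁ z) ^ 2
        = 1 / (ζ - z) ^ 2 - deriv g₁ ζ * deriv g₁ z / (g₁ ζ - g₁ z) ^ 2)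
    (hdiag2 : ∀ ζ ∈ Metric.ball (0 : ℂ) 1, ∀ z ∈ Metric.ball (0 : ℂ) 1, ζ ≠ z →
      1 / (ζ - z) ^ 2 - deriv f₂ ζ * deriv f₂ z / (f₂ ζ - f₂ z) ^ 2
        = 1 / (ζ - z) ^ 2 - deriv g₂ ζ * deriv g₂ z / (g₂ ζ - g₂ z) ^ 2) :
    Set.EqOn f₁ g₁ (Metric.ball (0 : ℂ) 1) ∧
      Set.EqOn f₂ g₂ (Metric.ball (0 : ℂ) 1) :=
  grunsky_kernels_determine_pair_general f₁ f₂ g₁ g₂ hf₁ hf₂ hg₁ hg₂ hif₂ hdisjf hdisjg hnf₁0 hnf₁'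
    hnf₂0 hng₁0 hng₁' hng₂0 hcross12 hcross21
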